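/- arXiv:2012.05398 — 4 statements merged into one kernel-verified Lean document; each statement's English description precedes it below -/
import Mathlib

section
/- The map μ ↦ MOT_C(μ) from (Δ_n)^k to ℝ is Lipschitz with respect to the entrywise ℓ₁ norm on the marginals, with Lipschitz constant 2·C_max, where C_max = max_{j⃗} |C_{j⃗}|. That is, |MOT_C(μ) − MOT_C(μ')| ≤ 2 C_max · Σ_{i=1}^k ‖μ_i − μ'_i‖₁. -/
open Finset

noncomputable def marg {n k : ℕ} (P : (Fin k → Fin n) → ℝ) (i : Fin k) (j : Fin n) : ℝ :=
  ∑ x : Fin k → Fin n, if x i = j then P x else 0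

def simplex {n : ℕ} (μ : Fin n → ℝ) : Prop :=
  (∀ j, 0 ≤ μ j) ∧ ∑ j, μ j = 1

noncomputable def transport {n k : ℕ} (μ : Fin k → Fin n → ℝ) : Set ((Fin k → Fin n) → ℝ) :=
  {P | (∀ x, 0 ≤ P x) ∧ ∀ i j, marg P i j = μ i j}

noncomputable def dotT {n k : ℕ} (P C : (Fin k → Fin n) → ℝ) : ℝ :=
  ∑ x : Fin k → Fin n, P x * C x

noncomputable def MOT {n k : ℕ} (C : (Fin k → Fin n) → ℝ) (μ : Fin k → Fin n → ℝ) : ℝ :=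
  sInf ((fun P => dotT P C) '' transport μ)

noncomputable def MINC {n k : ℕ} (C : (Fin k → Fin n) → ℝ) (p : Fin k → Fin n → ℝ) : ℝ :=
  ⨅ x : Fin k → Fin n, (C x - ∑ i, p i (x i))

/-!
Rounding: given a plan `P` with marginals `μ`, multiply `P x` by `∏ i, min (μ' i (x i) / μ i (x i)) 1`.
The result has marginals below `μ'`, and by the union bound `1 - ∏ fᵢ ≤ ∑ (1 - fᵢ)` it has lost at
most `∑ i, ‖μ i - μ' i‖₁` of mass. Adding the (rescaled) product of the deficit marginals gives a
plan `Q` with marginals `μ'` and `‖Q - P‖₁ ≤ 2 ∑ i, ‖μ i - μ' i‖₁`, and costs of plans differ by at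
most `max |C|` times their `ℓ₁` distance.
-/

section Marginals

variable {n k : ℕ}

lemma sum_marg_mul (P : (Fin k → Fin n) → ℝ) (i : Fin k) (g : Fin n → ℝ) :
    ∑ j, marg P i j * g j = ∑ x, P x * g (x i) := by
  simp only [marg, sum_mul, ite_mul, zero_mul]
  rw [sum_comm]
  exact sum_congr rfl fun x _ => by simp

lemma sum_marg (P : (Fin k → Fin n) → ℝ) (i : Fin k) : ∑ j, marg P i j = ∑ x, P x := by
  simpa using sum_marg_mul P i 1

lemma marg_mono {P Q : (Fin k → Fin n) → ℝ} (h : ∀ x, P x ≤ Q x) (i : Fin k) (j : Fin n) :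
    marg P i j ≤ marg Q i j :=
  sum_le_sum fun x _ => by split_ifs <;> simp [h x]

lemma marg_add (P Q : (Fin k → Fin n) → ℝ) (i : Fin k) (j : Fin n) :
    marg (fun x => P x + Q x) i j = marg P i j + marg Q i j := by
  simp only [marg, ← sum_add_distrib]
  exact sum_congr rfl fun x _ => by split_ifs <;> simp

lemma marg_div (P : (Fin k → Fin n) → ℝ) (c : ℝ) (i : Fin k) (j : Fin n) :
    marg (fun x => P x / c) i j = marg P i j / c := by
  simp only [marg, sum_div]
  exact sum_congr rfl fun x _ => by split_ifs <;> simp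

lemma marg_mul_apply (P : (Fin k → Fin n) → ℝ) (g : Fin n → ℝ) (i : Fin k) (j : Fin n) :
    marg (fun x => P x * g (x i)) i j = marg P i j * g j := by
  simp only [marg, sum_mul]
  exact sum_congr rfl fun x _ => by split_ifs with h <;> simp [h]

lemma marg_prod (g : Fin k → Fin n → ℝ) (i : Fin k) (j : Fin n) :
    marg (fun x => ∏ l, g l (x l)) i j = g i j * ∏ l ∈ univ.erase i, ∑ a, g l a := by
  classical
  have hfilter := Fintype.piFinset_update_singleton_eq_filter_piFinset_eq
    (fun _ : Fin k => (univ : Finset (Fin n))) i (mem_univ j)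
  rw [Fintype.piFinset_univ] at hfilter
  rw [marg, ← sum_filter, ← hfilter, ← prod_univ_sum, ← mul_prod_erase univ _ (mem_univ i)]
  congr 1
  · simp
  · exact prod_congr rfl fun l hl => by simp [ne_of_mem_erase hl]

lemma marg_prod_div_pow {d : Fin k → Fin n → ℝ} {t : ℝ} (hd : ∀ i j, 0 ≤ d i j)
    (hsum : ∀ i, ∑ j, d i j = t) (i : Fin k) (j : Fin n) :
    marg (fun x => (∏ l, d l (x l)) / t ^ (k - 1)) i j = d i j := by
  rw [marg_div, marg_prod, prod_congr rfl fun l _ => hsum l, prod_const, card_erase_of_mem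
    (mem_univ i), card_univ, Fintype.card_fin]
  rcases eq_or_ne t 0 with rfl | ht
  · simp [(sum_eq_zero_iff_of_nonneg fun j _ => hd i j).mp (hsum i) j (mem_univ j)]
  · field_simp

end Marginals

section Transport

variable {n k : ℕ} {μ μ' : Fin k → Fin n → ℝ} {P : (Fin k → Fin n) → ℝ}

lemma sum_eq_of_mem_transport (hP : P ∈ transport μ) (i : Fin k) :
    ∑ x, P x = ∑ j, μ i j := by
  rw [← sum_marg P i]
  exact sum_congr rfl fun j _ => hP.2 i j

lemma transport_nonempty (hμ : ∀ i, simplex (μ i)) : (transport μ).Nonempty :=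
  ⟨fun x => ∏ l, μ l (x l), fun x => prod_nonneg fun l _ => (hμ l).1 (x l),
    fun i j => by simp [marg_prod, (hμ _).2]⟩

lemma one_sub_prod_le_sum_one_sub {ι : Type*} (s : Finset ι) {f : ι → ℝ}
    (h0 : ∀ i ∈ s, 0 ≤ f i) (h1 : ∀ i ∈ s, f i ≤ 1) :
    1 - ∏ i ∈ s, f i ≤ ∑ i ∈ s, (1 - f i) := by
  classical
  induction s using Finset.induction with
  | empty => simp
  | insert a s ha ih =>
    rw [prod_insert ha, sum_insert ha]
    have hs0 : ∀ i ∈ s, 0 ≤ f i := fun i hi => h0 i (mem_insert_of_mem hi)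
    have hs1 : ∀ i ∈ s, f i ≤ 1 := fun i hi => h1 i (mem_insert_of_mem hi)
    nlinarith [ih hs0 hs1, mul_le_of_le_one_left (sub_nonneg.mpr (prod_le_one hs0 hs1))
      (h1 a (mem_insert_self a s))]

lemma exists_le_marg_le_of_mem_transport (hP : P ∈ transport μ) (hμ' : ∀ i j, 0 ≤ μ' i j) :
    ∃ R : (Fin k → Fin n) → ℝ, (∀ x, 0 ≤ R x) ∧ (∀ x, R x ≤ P x) ∧
      (∀ i j, marg R i j ≤ μ' i j) ∧ ∑ x, (P x - R x) ≤ ∑ i, ∑ j, |μ i j - μ' i j| := by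
  obtain ⟨hP0, hPμ⟩ := hP
  have hμ0 (i : Fin k) (j : Fin n) : 0 ≤ μ i j :=
    hPμ i j ▸ (by simpa [marg] using marg_mono hP0 i j)
  set f : Fin k → Fin n → ℝ := fun i j => min (μ' i j / μ i j) 1
  have hf0 (i : Fin k) (j : Fin n) : 0 ≤ f i j := le_min (div_nonneg (hμ' i j) (hμ0 i j)) one_pos.le
  have hf1 (i : Fin k) (j : Fin n) : f i j ≤ 1 := min_le_right _ _
  have hμf (i : Fin k) (j : Fin n) : μ i j * f i j = min (μ' i j) (μ i j) := by
    rcases (hμ0 i j).eq_or_lt with h | h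
    · simp [f, ← h, hμ' i j]
    · rw [mul_min_of_nonneg _ _ h.le, mul_div_cancel₀ _ h.ne', mul_one]
  have hprod_le (x : Fin k → Fin n) (i : Fin k) : ∏ l, f l (x l) ≤ f i (x i) := by
    rw [← mul_prod_erase univ _ (mem_univ i)]
    exact mul_le_of_le_one_right (hf0 i (x i))
      (prod_le_one (fun l _ => hf0 l (x l)) fun l _ => hf1 l (x l))
  refine ⟨fun x => P x * ∏ l, f l (x l),
    fun x => mul_nonneg (hP0 x) (prod_nonneg fun l _ => hf0 l (x l)),
    fun x => mul_le_of_le_one_right (hP0 x) (prod_le_one (fun l _ => hf0 l (x l))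
      fun l _ => hf1 l (x l)), fun i j => ?_, ?_⟩
  · calc marg (fun x => P x * ∏ l, f l (x l)) i j ≤ marg (fun x => P x * f i (x i)) i j :=
          marg_mono (fun x => mul_le_mul_of_nonneg_left (hprod_le x i) (hP0 x)) i j
      _ = min (μ' i j) (μ i j) := by rw [marg_mul_apply, hPμ, hμf]
      _ ≤ μ' i j := min_le_left _ _
  · calc ∑ x, (P x - P x * ∏ l, f l (x l)) = ∑ x, P x * (1 - ∏ l, f l (x l)) := by
          simp only [mul_one_sub]
      _ ≤ ∑ x, P x * ∑ l, (1 - f l (x l)) :=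
          sum_le_sum fun x _ => mul_le_mul_of_nonneg_left (one_sub_prod_le_sum_one_sub _
            (fun l _ => hf0 l (x l)) fun l _ => hf1 l (x l)) (hP0 x)
      _ = ∑ i, ∑ j, (μ i j - min (μ' i j) (μ i j)) := by
          simp only [mul_sum]
          rw [sum_comm]
          refine sum_congr rfl fun i _ => ?_
          rw [← sum_marg_mul P i fun a => 1 - f i a]
          simp only [hPμ, mul_one_sub, hμf]
      _ ≤ ∑ i, ∑ j, |μ i j - μ' i j| := by
          gcongr with i _ j _
          rcases min_choice (μ' i j) (μ i j) with h | h <;> rw [h]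
          · exact le_abs_self _
          · simp

lemma exists_mem_transport_ge [NeZero k] {R : (Fin k → Fin n) → ℝ} (hR0 : ∀ x, 0 ≤ R x)
    (hRμ : ∀ i j, marg R i j ≤ μ i j) (hμ : ∀ i, simplex (μ i)) :
    ∃ Q ∈ transport μ, ∀ x, R x ≤ Q x := by
  set d : Fin k → Fin n → ℝ := fun i j => μ i j - marg R i j
  have hd0 (i : Fin k) (j : Fin n) : 0 ≤ d i j := sub_nonneg.mpr (hRμ i j)
  have hdsum (i : Fin k) : ∑ j, d i j = 1 - ∑ x, R x := by
    simp only [d, sum_sub_distrib, (hμ i).2, sum_marg]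
  set e : (Fin k → Fin n) → ℝ := fun x => (∏ l, d l (x l)) / (1 - ∑ x, R x) ^ (k - 1)
  have he0 (x : Fin k → Fin n) : 0 ≤ e x :=
    div_nonneg (prod_nonneg fun l _ => hd0 l (x l))
      (pow_nonneg (hdsum 0 ▸ sum_nonneg fun j _ => hd0 0 j) _)
  refine ⟨fun x => R x + e x, ⟨fun x => add_nonneg (hR0 x) (he0 x), fun i j => ?_⟩,
    fun x => le_add_of_nonneg_right (he0 x)⟩
  rw [marg_add, marg_prod_div_pow hd0 hdsum]
  ring

theorem exists_mem_transport_sum_abs_sub_le [NeZero k] (hμ : ∀ i, simplex (μ i))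
    (hμ' : ∀ i, simplex (μ' i)) (hP : P ∈ transport μ) :
    ∃ Q ∈ transport μ', ∑ x, |Q x - P x| ≤ 2 * ∑ i, ∑ j, |μ i j - μ' i j| := by
  obtain ⟨R, hR0, hRP, hRμ', hPR⟩ :=
    exists_le_marg_le_of_mem_transport hP fun i => (hμ' i).1
  obtain ⟨Q, hQ, hRQ⟩ := exists_mem_transport_ge hR0 hRμ' hμ'
  have hP1 : ∑ x, P x = 1 := (sum_eq_of_mem_transport hP 0).trans (hμ 0).2
  have hQ1 : ∑ x, Q x = 1 := (sum_eq_of_mem_transport hQ 0).trans (hμ' 0).2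
  refine ⟨Q, hQ, ?_⟩
  calc ∑ x, |Q x - P x| ≤ ∑ x, ((Q x - R x) + (P x - R x)) :=
        sum_le_sum fun x _ => abs_sub_le_iff.mpr ⟨by linarith [hRP x], by linarith [hRQ x]⟩
    _ = 2 * ∑ x, (P x - R x) := by
        simp only [sum_add_distrib, sum_sub_distrib, hP1, hQ1]
        ring
    _ ≤ 2 * ∑ i, ∑ j, |μ i j - μ' i j| := by linarith

end Transport

section Cost

variable {n k : ℕ}

lemma dotT_sub_dotT_le (P Q C : (Fin k → Fin n) → ℝ) :
    dotT Q C - dotT P C ≤ (⨆ x, |C x|) * ∑ x, |Q x - P x| := by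
  rw [dotT, dotT, ← sum_sub_distrib, mul_sum]
  refine sum_le_sum fun x _ => ?_
  calc Q x * C x - P x * C x = (Q x - P x) * C x := by ring
    _ ≤ |Q x - P x| * |C x| := abs_mul (Q x - P x) (C x) ▸ le_abs_self _
    _ ≤ |Q x - P x| * ⨆ x, |C x| :=
        mul_le_mul_of_nonneg_left (le_ciSup (f := fun x => |C x|) (Set.finite_range _).bddAbove x) (abs_nonneg _)
    _ = (⨆ x, |C x|) * |Q x - P x| := mul_comm _ _

lemma bddBelow_dotT_image_transport [NeZero k] (C : (Fin k → Fin n) → ℝ)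
    {μ : Fin k → Fin n → ℝ} (hμ : ∀ i, simplex (μ i)) :
    BddBelow ((fun P => dotT P C) '' transport μ) := by
  refine ⟨-⨆ x, |C x|, ?_⟩
  rintro _ ⟨P, hP, rfl⟩
  have h := dotT_sub_dotT_le P 0 C
  simp only [dotT, Pi.zero_apply, zero_mul, sum_const_zero, zero_sub, abs_neg,
    fun x => abs_of_nonneg (hP.1 x), sum_eq_of_mem_transport hP 0, (hμ 0).2, mul_one] at h
  show -(⨆ x, |C x|) ≤ dotT P C
  rw [dotT]
  linarith

lemma MOT_le_add [NeZero k] (C : (Fin k → Fin n) → ℝ) {μ μ' : Fin k → Fin n → ℝ}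
    (hμ : ∀ i, simplex (μ i)) (hμ' : ∀ i, simplex (μ' i)) :
    MOT C μ' ≤ MOT C μ + 2 * (⨆ x, |C x|) * ∑ i, ∑ j, |μ i j - μ' i j| := by
  have hC : 0 ≤ ⨆ x, |C x| := Real.iSup_nonneg fun x => abs_nonneg _
  rw [← sub_le_iff_le_add]
  refine le_csInf ((transport_nonempty hμ).image _) ?_
  rintro _ ⟨P, hP, rfl⟩
  obtain ⟨Q, hQ, hQP⟩ := exists_mem_transport_sum_abs_sub_le hμ hμ' hP
  have hMOT : MOT C μ' ≤ dotT Q C := csInf_le (bddBelow_dotT_image_transport C hμ') ⟨Q, hQ, rfl⟩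
  have hcost := dotT_sub_dotT_le P Q C
  have hscale := mul_le_mul_of_nonneg_left hQP hC
  show MOT C μ' - _ ≤ dotT P C
  linarith

end Cost

theorem stmt_4_general {n k : ℕ} (C : (Fin k → Fin n) → ℝ)
    (μ μ' : Fin k → Fin n → ℝ) (hμ : ∀ i, simplex (μ i)) (hμ' : ∀ i, simplex (μ' i)) :
    |MOT C μ - MOT C μ'| ≤
      2 * (⨆ x : Fin k → Fin n, |C x|) * ∑ i, ∑ j, |μ i j - μ' i j| := by
  obtain rfl | hk := k.eq_zero_or_pos
  · simp [Subsingleton.elim μ μ']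
  have : NeZero k := NeZero.of_pos hk
  have h := MOT_le_add C hμ hμ'
  have h' := MOT_le_add C hμ' hμ
  simp only [abs_sub_comm (μ' _ _)] at h'
  exact abs_sub_le_iff.mpr ⟨by linarith, by linarith⟩

/-- μ ↦ MOT_C(μ) is 2·C_max-Lipschitz in entrywise ℓ₁ norm. -/
theorem stmt_4 {n k : ℕ} (hn : 0 < n) (C : (Fin k → Fin n) → ℝ)
    (μ μ' : Fin k → Fin n → ℝ) (hμ : ∀ i, simplex (μ i)) (hμ' : ∀ i, simplex (μ' i)) :
    |MOT C μ - MOT C μ'| ≤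
      2 * (⨆ x : Fin k → Fin n, |C x|) * ∑ i, ∑ j, |μ i j - μ' i j| :=
  stmt_4_general C μ μ' hμ hμ'
end

section
/- For a submodular set function C : 2^{[k]} → ℝ with C(∅) = 0, the value of the MOT problem with Bernoulli marginals Ber(x₁),…,Ber(x_k) equals the Lovász extension of C evaluated at (x₁,…,x_k): if σ is a permutation of [k] with x_{σ(1)} ≥ ⋯ ≥ x_{σ(k)} and S_t = {σ(1),…,σ(t)}, then min_{P ∈ M(Ber(x₁),…,Ber(x_k))} E_{S∼P} C(S) = Σ_{t=1}^k x_{σ(t)} (C(S_t) − C(S_{t−1})). -/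
/-!
The greedy weights `w (σ t) = C (S (t + 1)) - C (S t)` along the chain `S 0 ⊆ ⋯ ⊆ S k` satisfy
`∑ i ∈ S, w i ≤ C S` for every `S` by submodularity, with equality on the chain. Hence every
coupling `P` with the given marginals has `𝔼 C ≥ 𝔼 ∑ i ∈ S, w i = ∑ i, w i * x i`, which is the
Lovász extension; the comonotone coupling lives on the chain, so it attains this bound.
-/

open Finset

section Chain

variable {k : ℕ} (σ : Equiv.Perm (Fin k))

def chainSet (n : ℕ) : Finset (Fin k) :=
  image σ (univ.filter fun s : Fin k => (s : ℕ) < n)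

variable {σ} in
lemma mem_chainSet {i : Fin k} {n : ℕ} : i ∈ chainSet σ n ↔ (σ.symm i : ℕ) < n := by
  simp only [chainSet, mem_image, mem_filter, mem_univ, true_and]
  exact ⟨fun ⟨s, hs, hsi⟩ => hsi ▸ by simpa using hs, fun h => ⟨σ.symm i, h, σ.apply_symm_apply i⟩⟩

@[simp]
lemma chainSet_zero : chainSet σ 0 = ∅ := by
  ext i; simp [mem_chainSet]

lemma chainSet_succ {n : ℕ} (hn : n < k) :
    chainSet σ (n + 1) = insert (σ ⟨n, hn⟩) (chainSet σ n) := by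
  ext i
  rw [mem_insert, mem_chainSet, mem_chainSet, Nat.lt_succ_iff_lt_or_eq, ← Equiv.symm_apply_eq,
    Fin.ext_iff]
  exact or_comm

lemma apply_notMem_chainSet {n : ℕ} (hn : n < k) : σ ⟨n, hn⟩ ∉ chainSet σ n := by
  simp [mem_chainSet]

lemma chainSet_of_le {n : ℕ} (hn : k ≤ n) : chainSet σ n = univ := by
  ext i; simpa [mem_chainSet] using (σ.symm i).isLt.trans_le hn

end Chain

section Greedy

variable {k : ℕ} (σ : Equiv.Perm (Fin k)) (C : Finset (Fin k) → ℝ)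

/-- The vertex of the base polyhedron of `C` produced by the greedy algorithm in the order `σ`. -/
def greedyWeight (i : Fin k) : ℝ :=
  C (chainSet σ ((σ.symm i : ℕ) + 1)) - C (chainSet σ (σ.symm i))

lemma greedyWeight_apply {n : ℕ} (hn : n < k) :
    greedyWeight σ C (σ ⟨n, hn⟩) = C (chainSet σ (n + 1)) - C (chainSet σ n) := by
  simp [greedyWeight]

lemma sum_greedyWeight_chainSet {n : ℕ} (hn : n ≤ k) :
    ∑ i ∈ chainSet σ n, greedyWeight σ C i = C (chainSet σ n) - C ∅ := by
  induction n with
  | zero => simp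
  | succ n ih =>
    rw [chainSet_succ σ hn, sum_insert (apply_notMem_chainSet σ hn), ih (by omega),
      greedyWeight_apply, chainSet_succ σ hn]
    ring

lemma sum_greedyWeight_mul_eq (x : Fin k → ℝ) :
    ∑ i, greedyWeight σ C i * x i =
      ∑ t : Fin k, x (σ t) * (C (chainSet σ (t + 1)) - C (chainSet σ t)) := by
  rw [← Equiv.sum_comp σ]
  simp [greedyWeight, mul_comm]

variable {C}

lemma sum_greedyWeight_le (hsub : ∀ A B : Finset (Fin k), C (A ∪ B) + C (A ∩ B) ≤ C A + C B)
    (hempty : C ∅ = 0) (S : Finset (Fin k)) : ∑ i ∈ S, greedyWeight σ C i ≤ C S := by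
  suffices h : ∀ n ≤ k, ∑ i ∈ S ∩ chainSet σ n, greedyWeight σ C i ≤ C (S ∩ chainSet σ n) by
    simpa [chainSet_of_le] using h k le_rfl
  intro n hn
  induction n with
  | zero => simp [hempty]
  | succ n ih =>
    have hn' : n < k := hn
    rw [chainSet_succ σ hn']
    set a := σ ⟨n, hn'⟩
    have ha : a ∉ chainSet σ n := apply_notMem_chainSet σ hn'
    by_cases haS : a ∈ S
    · rw [inter_insert_of_mem haS, sum_insert fun h => ha (mem_inter.1 h).2,
        greedyWeight_apply σ C hn', chainSet_succ σ hn']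
      have := hsub (insert a (S ∩ chainSet σ n)) (chainSet σ n)
      rw [insert_union, union_eq_right.2 inter_subset_right, insert_inter_of_notMem ha,
        inter_assoc, inter_self] at this
      linarith [ih hn'.le]
    · rw [inter_insert_of_notMem haS]
      exact ih hn'.le

end Greedy

section Marginals

variable {α β ι : Type*} [Fintype α] [DecidableEq α] [Fintype β] [DecidableEq β]

lemma sum_mul_sum_eq_of_marginal {P : Finset α → ℝ} {x : α → ℝ}
    (hPx : ∀ i, ∑ S, (if i ∈ S then P S else 0) = x i) (w : α → ℝ) :
    ∑ S, P S * ∑ i ∈ S, w i = ∑ i, w i * x i := by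
  simp_rw [← hPx, mul_sum, mul_ite, mul_zero]
  rw [sum_comm]
  refine sum_congr rfl fun S _ => ?_
  rw [← sum_filter, filter_mem_eq_inter, univ_inter]
  exact sum_congr rfl fun i _ => mul_comm _ _

lemma sum_mul_le_of_marginal {P C : Finset α → ℝ} {x w : α → ℝ} (hP : ∀ S, 0 ≤ P S)
    (hPx : ∀ i, ∑ S, (if i ∈ S then P S else 0) = x i) (hw : ∀ S, ∑ i ∈ S, w i ≤ C S) :
    ∑ i, w i * x i ≤ ∑ S, P S * C S := by
  rw [← sum_mul_sum_eq_of_marginal hPx]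
  exact sum_le_sum fun S _ => mul_le_mul_of_nonneg_left (hw S) (hP S)

lemma sum_pushforward_mul (s : Finset ι) (T : ι → β) (q : ι → ℝ) (f : β → ℝ) :
    ∑ b, (∑ n ∈ s, if b = T n then q n else 0) * f b = ∑ n ∈ s, q n * f (T n) := by
  simp_rw [sum_mul, ite_mul, zero_mul]
  rw [sum_comm]
  simp

end Marginals

section Coupling

variable {k : ℕ} (σ : Equiv.Perm (Fin k)) (x : Fin k → ℝ)

def chainLevel : ℕ → ℝ
  | 0 => 1
  | n + 1 => if h : n < k then x (σ ⟨n, h⟩) else 0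

/-- The comonotone coupling `{i | U < x i}` with `U` uniform on `[0, 1]`: when `x ∘ σ` is
antitone it equals `chainSet σ n` with probability `chainLevel σ x n - chainLevel σ x (n + 1)`. -/
def chainDist (S : Finset (Fin k)) : ℝ :=
  ∑ n ∈ range (k + 1),
    if S = chainSet σ n then chainLevel σ x n - chainLevel σ x (n + 1) else 0

variable {σ x}

lemma chainLevel_succ_le (hx : ∀ i, 0 ≤ x i ∧ x i ≤ 1) (hsort : Antitone (x ∘ σ)) (n : ℕ) :
    chainLevel σ x (n + 1) ≤ chainLevel σ x n := by
  rcases n with _ | n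
  · simp only [chainLevel]
    split_ifs
    exacts [(hx _).2, zero_le_one]
  · simp only [chainLevel]
    split_ifs
    · exact hsort (Fin.mk_le_mk.2 n.le_succ)
    · omega
    · exact (hx _).1
    · exact le_rfl

lemma chainDist_nonneg (hx : ∀ i, 0 ≤ x i ∧ x i ≤ 1) (hsort : Antitone (x ∘ σ))
    (S : Finset (Fin k)) : 0 ≤ chainDist σ x S :=
  sum_nonneg fun n _ => by
    split_ifs
    exacts [sub_nonneg.2 (chainLevel_succ_le hx hsort n), le_rfl]

lemma chainLevel_of_lt {n : ℕ} (hn : k < n) : chainLevel σ x n = 0 := by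
  obtain ⟨n, rfl⟩ := Nat.exists_eq_add_one_of_ne_zero (by omega : n ≠ 0)
  simp [chainLevel, show ¬n < k by omega]

lemma sum_chainDist_mul (f : Finset (Fin k) → ℝ) :
    ∑ S, chainDist σ x S * f S =
      ∑ n ∈ range (k + 1), (chainLevel σ x n - chainLevel σ x (n + 1)) * f (chainSet σ n) :=
  sum_pushforward_mul _ _ _ f

lemma sum_chainDist : ∑ S, chainDist σ x S = 1 := by
  have := sum_chainDist_mul (σ := σ) (x := x) 1
  simp only [Pi.one_apply, mul_one] at this
  rw [this, sum_range_sub', chainLevel_of_lt (Nat.lt_succ_self k), sub_zero]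
  rfl

lemma chainDist_marginal (i : Fin k) : ∑ S, (if i ∈ S then chainDist σ x S else 0) = x i := by
  set r : ℕ := (σ.symm i : ℕ)
  have hr : r < k := (σ.symm i).isLt
  have hIco : (range (k + 1)).filter (r < ·) = Ico (r + 1) (k + 1) := by
    ext n; simp only [mem_filter, mem_range, mem_Ico]; omega
  have := sum_chainDist_mul (σ := σ) (x := x) fun S => if i ∈ S then 1 else 0
  simp only [mul_boole, mem_chainSet] at this
  rw [this, ← sum_filter, hIco, ← neg_inj, ← sum_neg_distrib]
  simp_rw [neg_sub]
  rw [sum_Ico_sub _ (by omega), chainLevel_of_lt (Nat.lt_succ_self k)]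
  simp [chainLevel, hr, r]

lemma sum_chainDist_mul_eq {C : Finset (Fin k) → ℝ} (hempty : C ∅ = 0) :
    ∑ S, chainDist σ x S * C S = ∑ i, greedyWeight σ C i * x i := by
  rw [← sum_mul_sum_eq_of_marginal chainDist_marginal, sum_chainDist_mul, sum_chainDist_mul]
  refine sum_congr rfl fun n hn => ?_
  rw [sum_greedyWeight_chainSet σ C (Nat.lt_succ_iff.1 (mem_range.1 hn)), hempty, sub_zero]

end Coupling

/-- for submodular C with C(∅) = 0, the MOT value with Bernoulli
marginals equals the Lovász extension of C at (x₁,…,x_k). -/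
theorem stmt_14 {k : ℕ} (C : Finset (Fin k) → ℝ)
    (hsub : ∀ A B : Finset (Fin k), C (A ∪ B) + C (A ∩ B) ≤ C A + C B)
    (hempty : C ∅ = 0)
    (x : Fin k → ℝ) (hx : ∀ i, 0 ≤ x i ∧ x i ≤ 1)
    (σ : Equiv.Perm (Fin k))
    (hsort : ∀ s t : Fin k, s ≤ t → x (σ t) ≤ x (σ s)) :
    sInf {v : ℝ | ∃ P : Finset (Fin k) → ℝ,
        (∀ S, 0 ≤ P S) ∧ (∑ S : Finset (Fin k), P S) = 1 ∧
        (∀ i, ∑ S : Finset (Fin k), (if i ∈ S then P S else 0) = x i) ∧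
        v = ∑ S : Finset (Fin k), P S * C S}
      = ∑ t : Fin k, x (σ t) *
          (C (Finset.image σ (Finset.univ.filter (fun s : Fin k => (s : ℕ) < (t : ℕ) + 1)))
            - C (Finset.image σ (Finset.univ.filter (fun s : Fin k => (s : ℕ) < (t : ℕ))))) := by
  change _ = ∑ t : Fin k, x (σ t) * (C (chainSet σ (t + 1)) - C (chainSet σ t))
  rw [← sum_greedyWeight_mul_eq]
  refine IsLeast.csInf_eq ⟨⟨chainDist σ x, chainDist_nonneg hx hsort, sum_chainDist,
    chainDist_marginal, (sum_chainDist_mul_eq hempty).symm⟩, ?_⟩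
  rintro _ ⟨P, hP, -, hPx, rfl⟩
  exact sum_mul_le_of_marginal hP hPx (sum_greedyWeight_le σ hsub hempty)
end

section
/- For the cost tensor C on {0,1}^k defined from a Boolean formula φ by C_{j₁,…,j_k} = −φ(j₁,…,j_k), and dual weights p with [p_i] = (0, −1/(2k)) for every i, the value MIN_C(p) = −max over all assignments j⃗ of [φ(j⃗) − ‖j⃗‖₁/(2k)]; in particular, if φ is satisfiable then MIN_C(p) = −1 + w*/(2k) where w* is the minimum Hamming weight of a satisfying assignment, and if φ is unsatisfiable then MIN_C(p) = 0. -/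
open Finset

/-- for C = −φ on {0,1}^k and dual weights p_i = (0, −1/(2k)),
MIN_C(p) = −max over assignments of (φ(j⃗) − ‖j⃗‖₁/(2k)); concretely, if φ is
satisfiable then MIN_C(p) = −1 + w*/(2k) where w* is the minimum Hamming weight of a
satisfying assignment, and if φ is unsatisfiable then MIN_C(p) = 0. -/
theorem stmt_15 {k : ℕ} (hk : 0 < k) (φ : (Fin k → Bool) → Bool) :
    ((∃ j : Fin k → Bool, φ j = true) →
      (⨅ j : Fin k → Bool,
          ((if φ j then (-1 : ℝ) else 0) +
            ((Finset.univ.filter (fun i => j i = true)).card : ℝ) / (2 * k)))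
        = -1 + ((sInf {w : ℕ | ∃ j : Fin k → Bool, φ j = true ∧
              (Finset.univ.filter (fun i => j i = true)).card = w} : ℕ) : ℝ) / (2 * k)) ∧
    ((¬ ∃ j : Fin k → Bool, φ j = true) →
      (⨅ j : Fin k → Bool,
          ((if φ j then (-1 : ℝ) else 0) +
            ((Finset.univ.filter (fun i => j i = true)).card : ℝ) / (2 * k)))
        = 0) := by
  have h2k : (0 : ℝ) < 2 * k := by positivity
  set f : (Fin k → Bool) → ℝ := fun j =>
    ((if φ j then (-1 : ℝ) else 0) +
      ((Finset.univ.filter (fun i => j i = true)).card : ℝ) / (2 * k)) with hf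
  have hbdd : BddBelow (Set.range f) := Set.Finite.bddBelow (Set.finite_range f)
  constructor
  · rintro ⟨j₀, hj₀⟩
    set S := {w : ℕ | ∃ j : Fin k → Bool, φ j = true ∧
        (Finset.univ.filter (fun i => j i = true)).card = w} with hS
    have hSne : S.Nonempty := ⟨_, j₀, hj₀, rfl⟩
    obtain ⟨j₁, hj₁, hcard⟩ := Nat.sInf_mem hSne
    have hwk : sInf S ≤ k := by
      rw [← hcard]
      calc _ ≤ (Finset.univ : Finset (Fin k)).card := Finset.card_filter_le _ _
        _ = k := by simp
    apply le_antisymm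
    · have := ciInf_le hbdd j₁
      refine this.trans_eq ?_
      simp [hf, hj₁, hcard]
    · apply le_ciInf
      intro j
      by_cases h : φ j = true
      · have : sInf S ≤ (Finset.univ.filter (fun i => j i = true)).card :=
          Nat.sInf_le ⟨j, h, rfl⟩
        simp only [hf, h, if_pos]
        have hle : ((sInf S : ℕ) : ℝ) / (2 * k) ≤
            ((Finset.univ.filter (fun i => j i = true)).card : ℝ) / (2 * k) := by
          gcongr

        linarith
      · simp only [hf, h, if_neg, Bool.not_eq_true]
        have h1 : ((sInf S : ℕ) : ℝ) / (2 * k) ≤ 1 := by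
          rw [div_le_one h2k]
          have : ((sInf S : ℕ) : ℝ) ≤ (k : ℝ) := Nat.cast_le.mpr hwk
          linarith
        have h2 : (0 : ℝ) ≤ ((Finset.univ.filter (fun i => j i = true)).card : ℝ) / (2 * k) := by
          positivity
        linarith
  · intro hns
    apply le_antisymm
    · have := ciInf_le hbdd (fun _ => false)
      refine this.trans_eq ?_
      have hφ : φ (fun _ => false) ≠ true := fun h => hns ⟨_, h⟩
      simp [hf, hφ]
    · apply le_ciInf
      intro j
      have hφ : φ j ≠ true := fun h => hns ⟨_, h⟩
      simp only [hf, if_neg hφ]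
      positivity
end

section
/- For a supermodular set function C : 2^{[k]} → ℝ, the negated function −C is submodular, and consequently the MOT problem max_{P ∈ M(Ber(x₁),…,Ber(x_k))} E_{S∼P} C(S) (maximization form) equals the Lovász extension of C at (x₁,…,x_k); in contrast, the minimization min_{P} E_{S∼P} C(S) equals the convex envelope of C at (x₁,…,x_k), which in general is strictly below the Lovász extension. -/
open Finset

def myPre {k : ℕ} (σ : Equiv.Perm (Fin k)) (t : ℕ) : Finset (Fin k) :=
  Finset.image σ (Finset.univ.filter (fun s : Fin k => (s : ℕ) < t))

lemma mem_myPre {k : ℕ} (σ : Equiv.Perm (Fin k)) (t : ℕ) (i : Fin k) :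
    i ∈ myPre σ t ↔ ((σ.symm i : Fin k) : ℕ) < t := by
  simp only [myPre, mem_image, mem_filter, mem_univ, true_and]
  constructor
  · rintro ⟨s, hs, rfl⟩; simpa using hs
  · intro h; exact ⟨σ.symm i, h, by simp⟩

lemma myPre_zero {k : ℕ} (σ : Equiv.Perm (Fin k)) : myPre σ 0 = ∅ := by
  ext i; simp [mem_myPre]

lemma myPre_top {k : ℕ} (σ : Equiv.Perm (Fin k)) : myPre σ k = Finset.univ := by
  ext i; simp [mem_myPre, (σ.symm i).isLt]

lemma myPre_succ {k : ℕ} (σ : Equiv.Perm (Fin k)) (t : Fin k) :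
    myPre σ ((t : ℕ) + 1) = insert (σ t) (myPre σ (t : ℕ)) := by
  ext i
  simp only [mem_myPre, mem_insert]
  constructor
  · intro h
    rcases Nat.lt_succ_iff_lt_or_eq.mp h with h | h
    · exact Or.inr h
    · left; have : σ.symm i = t := Fin.ext h
      rw [← this]; simp
  · rintro (rfl | h)
    · simp [Nat.lt_succ_iff]
    · exact Nat.lt_succ_of_lt h

lemma myPre_injOn {k : ℕ} (σ : Equiv.Perm (Fin k)) {a b : ℕ} (ha : a ≤ k) (hb : b ≤ k)
    (h : myPre σ a = myPre σ b) : a = b := by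
  have card : ∀ c : ℕ, c ≤ k → (myPre σ c).card = c := by
    intro c hc
    rw [myPre, Finset.card_image_of_injective _ σ.injective]
    have himg : Finset.image Fin.val (Finset.univ.filter fun s : Fin k => (s : ℕ) < c)
        = Finset.range c := by
      ext m
      simp only [mem_image, mem_filter, mem_univ, true_and, mem_range]
      constructor
      · rintro ⟨s, hs, rfl⟩; exact hs
      · intro hm; exact ⟨⟨m, lt_of_lt_of_le hm hc⟩, hm, rfl⟩
    calc (Finset.univ.filter fun s : Fin k => (s : ℕ) < c).card
        = (Finset.image Fin.val (Finset.univ.filter fun s : Fin k => (s : ℕ) < c)).card :=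
          (Finset.card_image_of_injective _ Fin.val_injective).symm
      _ = c := by rw [himg, Finset.card_range]
  have h1 := card a ha
  have h2 := card b hb
  rw [h] at h1
  omega

lemma greedy_bound {k : ℕ} (C : Finset (Fin k) → ℝ)
    (hsup : ∀ A B : Finset (Fin k), C A + C B ≤ C (A ∪ B) + C (A ∩ B))
    (hempty : C ∅ = 0) (σ : Equiv.Perm (Fin k)) (S : Finset (Fin k)) :
    C S ≤ ∑ t : Fin k, (if σ t ∈ S then C (myPre σ ((t:ℕ)+1)) - C (myPre σ (t:ℕ)) else 0) := by
  have htel : C S = ∑ t ∈ Finset.range k,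
      (C (S ∩ myPre σ (t+1)) - C (S ∩ myPre σ t)) := by
    rw [Finset.sum_range_sub (fun t => C (S ∩ myPre σ t)) k]
    rw [myPre_zero, myPre_top]
    simp [hempty]
  rw [htel, ← Fin.sum_univ_eq_sum_range (fun t => C (S ∩ myPre σ (t+1)) - C (S ∩ myPre σ t)) k]
  apply Finset.sum_le_sum
  intro t _
  by_cases hmem : σ t ∈ S
  · rw [if_pos hmem]
    have hsub : myPre σ (t:ℕ) ⊆ myPre σ ((t:ℕ)+1) := by
      intro i hi; rw [mem_myPre] at hi ⊢; omega
    have hu : (S ∩ myPre σ ((t:ℕ)+1)) ∪ myPre σ (t:ℕ) = myPre σ ((t:ℕ)+1) := by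
      apply Finset.Subset.antisymm
      · exact Finset.union_subset (Finset.inter_subset_right) hsub
      · intro i hi
        rw [myPre_succ] at hi
        rcases Finset.mem_insert.mp hi with rfl | hi
        · exact Finset.mem_union_left _ (Finset.mem_inter.mpr ⟨hmem, by rw [myPre_succ]; simp⟩)
        · exact Finset.mem_union_right _ hi
    have hi : (S ∩ myPre σ ((t:ℕ)+1)) ∩ myPre σ (t:ℕ) = S ∩ myPre σ (t:ℕ) := by
      rw [Finset.inter_assoc, Finset.inter_eq_right.mpr hsub]
    have := hsup (S ∩ myPre σ ((t:ℕ)+1)) (myPre σ (t:ℕ))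
    rw [hu, hi] at this
    linarith
  · rw [if_neg hmem]
    have : S ∩ myPre σ ((t:ℕ)+1) = S ∩ myPre σ (t:ℕ) := by
      ext i
      simp only [Finset.mem_inter, mem_myPre]
      constructor
      · rintro ⟨hiS, hlt⟩
        refine ⟨hiS, ?_⟩
        rcases Nat.lt_succ_iff_lt_or_eq.mp hlt with h | h
        · exact h
        · exfalso; apply hmem
          have : σ.symm i = t := Fin.ext h
          rw [← this]; simpa using hiS
      · rintro ⟨hiS, hlt⟩; exact ⟨hiS, Nat.lt_succ_of_lt hlt⟩
    rw [this]; simp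

lemma abel_sum (y a : ℕ → ℝ) (n : ℕ) :
    ∑ t ∈ Finset.range (n+1), (y t - y (t+1)) * a t
      = y 0 * a 0 - y (n+1) * a n + ∑ t ∈ Finset.range n, y (t+1) * (a (t+1) - a t) := by
  induction n with
  | zero => simp; ring
  | succ n ih =>
    rw [Finset.sum_range_succ, ih, Finset.sum_range_succ (fun t => y (t+1) * (a (t+1) - a t))]
    ring

def yfun {k : ℕ} (x : Fin k → ℝ) : ℕ → ℝ :=
  fun t => if t = 0 then 1 else if h : t - 1 < k then x ⟨t - 1, h⟩ else 0

lemma yfun_zero {k : ℕ} (x : Fin k → ℝ) : yfun x 0 = 1 := by simp [yfun]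

lemma yfun_succ {k : ℕ} (x : Fin k → ℝ) (s : Fin k) : yfun x ((s:ℕ)+1) = x s := by
  simp [yfun]

lemma yfun_top {k : ℕ} (x : Fin k → ℝ) (t : ℕ) (ht : k < t) : yfun x t = 0 := by
  have h0 : t ≠ 0 := by omega
  have h1 : ¬ (t - 1 < k) := by omega
  simp [yfun, h0, h1]

lemma yfun_pos {k : ℕ} (x : Fin k → ℝ) (t : ℕ) (ht : t ≠ 0) (h : t - 1 < k) :
    yfun x t = x ⟨t - 1, h⟩ := by simp [yfun, ht, dif_pos h]

lemma yfun_step {k : ℕ} (x : Fin k → ℝ) (hx : ∀ i, 0 ≤ x i ∧ x i ≤ 1)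
    (hmono : ∀ s t : Fin k, s ≤ t → x t ≤ x s) (t : ℕ) :
    yfun x (t + 1) ≤ yfun x t := by
  rcases Nat.eq_zero_or_pos t with rfl | ht
  · rw [yfun_zero]
    by_cases hk : 0 < k
    · rw [yfun_pos x 1 (by omega) (by omega)]
      exact (hx _).2
    · rw [yfun_top x 1 (by omega)]; norm_num
  · by_cases hk : t < k
    · rw [yfun_pos x (t+1) (by omega) (by omega), yfun_pos x t (by omega) (by omega)]
      exact hmono _ _ (by simp only [Fin.le_def]; omega)
    · rw [yfun_top x (t+1) (by omega)]
      by_cases hk2 : t ≤ k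
      · rw [yfun_pos x t (by omega) (by omega)]
        exact (hx _).1
      · rw [yfun_top x t (by omega)]

lemma chain_apply {k : ℕ} (σ : Equiv.Perm (Fin k)) (w : ℕ → ℝ) (f : Finset (Fin k) → ℝ) :
    ∑ S : Finset (Fin k), (∑ t ∈ Finset.range (k+1), if S = myPre σ t then w t else 0) * f S
      = ∑ t ∈ Finset.range (k+1), w t * f (myPre σ t) := by
  have : ∀ S : Finset (Fin k),
      (∑ t ∈ Finset.range (k+1), if S = myPre σ t then w t else 0) * f S
        = ∑ t ∈ Finset.range (k+1), if S = myPre σ t then w t * f S else 0 := by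
    intro S
    rw [Finset.sum_mul]
    exact Finset.sum_congr rfl fun t _ => by split_ifs <;> simp
  rw [Finset.sum_congr rfl fun S _ => this S, Finset.sum_comm]
  refine Finset.sum_congr rfl fun t _ => ?_
  rw [Finset.sum_ite_eq' Finset.univ (myPre σ t) (fun S => w t * f S)]
  simp

/-- for a supermodular set function C with C(∅) = 0, the negation −C is
submodular; the MOT maximization value with Bernoulli marginals equals the Lovász
extension of C at x; and the MOT minimization value equals the convex envelope of C
at x, which lies below the Lovász extension. -/
theorem stmt_19 {k : ℕ} (C : Finset (Fin k) → ℝ)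
    (hsup : ∀ A B : Finset (Fin k), C A + C B ≤ C (A ∪ B) + C (A ∩ B))
    (hempty : C ∅ = 0)
    (x : Fin k → ℝ) (hx : ∀ i, 0 ≤ x i ∧ x i ≤ 1)
    (σ : Equiv.Perm (Fin k))
    (hsort : ∀ s t : Fin k, s ≤ t → x (σ t) ≤ x (σ s)) :
    (∀ A B : Finset (Fin k), (-C (A ∪ B)) + (-C (A ∩ B)) ≤ (-C A) + (-C B)) ∧
    sSup {v : ℝ | ∃ P : Finset (Fin k) → ℝ,
        (∀ S, 0 ≤ P S) ∧ (∑ S : Finset (Fin k), P S) = 1 ∧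
        (∀ i, ∑ S : Finset (Fin k), (if i ∈ S then P S else 0) = x i) ∧
        v = ∑ S : Finset (Fin k), P S * C S}
      = (∑ t : Fin k, x (σ t) *
          (C (Finset.image σ (Finset.univ.filter (fun s : Fin k => (s : ℕ) < (t : ℕ) + 1)))
            - C (Finset.image σ (Finset.univ.filter (fun s : Fin k => (s : ℕ) < (t : ℕ)))))) ∧
    sInf {v : ℝ | ∃ P : Finset (Fin k) → ℝ,
        (∀ S, 0 ≤ P S) ∧ (∑ S : Finset (Fin k), P S) = 1 ∧
        (∀ i, ∑ S : Finset (Fin k), (if i ∈ S then P S else 0) = x i) ∧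
        v = ∑ S : Finset (Fin k), P S * C S}
      = sInf {v : ℝ | ∃ lam : Finset (Fin k) → ℝ,
        (∀ S, 0 ≤ lam S) ∧ (∑ S : Finset (Fin k), lam S) = 1 ∧
        (∀ i, ∑ S : Finset (Fin k), lam S * (if i ∈ S then (1:ℝ) else 0) = x i) ∧
        v = ∑ S : Finset (Fin k), lam S * C S} ∧
    sInf {v : ℝ | ∃ P : Finset (Fin k) → ℝ,
        (∀ S, 0 ≤ P S) ∧ (∑ S : Finset (Fin k), P S) = 1 ∧
        (∀ i, ∑ S : Finset (Fin k), (if i ∈ S then P S else 0) = x i) ∧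
        v = ∑ S : Finset (Fin k), P S * C S}
      ≤ (∑ t : Fin k, x (σ t) *
          (C (Finset.image σ (Finset.univ.filter (fun s : Fin k => (s : ℕ) < (t : ℕ) + 1)))
            - C (Finset.image σ (Finset.univ.filter (fun s : Fin k => (s : ℕ) < (t : ℕ)))))) := by
  classical
  set xs : Fin k → ℝ := fun s => x (σ s) with hxs_def
  have hxs : ∀ i, 0 ≤ xs i ∧ xs i ≤ 1 := fun i => hx (σ i)
  have hmono : ∀ s t : Fin k, s ≤ t → xs t ≤ xs s := fun s t h => hsort s t h
  set y : ℕ → ℝ := yfun xs with hy_def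
  set w : ℕ → ℝ := fun t => y t - y (t + 1) with hw_def
  have hwnn : ∀ t, 0 ≤ w t := fun t => sub_nonneg.mpr (yfun_step xs hxs hmono t)
  set Lval : ℝ := (∑ t : Fin k, x (σ t) *
          (C (Finset.image σ (Finset.univ.filter (fun s : Fin k => (s : ℕ) < (t : ℕ) + 1)))
            - C (Finset.image σ (Finset.univ.filter (fun s : Fin k => (s : ℕ) < (t : ℕ))))))
    with hLval_def
  set Vset : Set ℝ := {v : ℝ | ∃ P : Finset (Fin k) → ℝ,
        (∀ S, 0 ≤ P S) ∧ (∑ S : Finset (Fin k), P S) = 1 ∧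
        (∀ i, ∑ S : Finset (Fin k), (if i ∈ S then P S else 0) = x i) ∧
        v = ∑ S : Finset (Fin k), P S * C S} with hVset_def
  -- Lovász expression rewritten over range k
  have hL : Lval = ∑ t ∈ Finset.range k, y (t + 1) * (C (myPre σ (t + 1)) - C (myPre σ t)) := by
    rw [hLval_def,
      ← Fin.sum_univ_eq_sum_range (fun t => y (t + 1) * (C (myPre σ (t + 1)) - C (myPre σ t))) k]
    refine Finset.sum_congr rfl fun t _ => ?_
    rw [hy_def, yfun_succ]
    rfl
  -- the chain (greedy) distribution
  set P0 : Finset (Fin k) → ℝ :=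
    fun S => ∑ t ∈ Finset.range (k + 1), if S = myPre σ t then w t else 0 with hP0_def
  have hP0nn : ∀ S, 0 ≤ P0 S := by
    intro S
    refine Finset.sum_nonneg fun t _ => ?_
    split_ifs
    · exact hwnn t
    · exact le_refl 0
  have happly : ∀ f : Finset (Fin k) → ℝ,
      ∑ S : Finset (Fin k), P0 S * f S = ∑ t ∈ Finset.range (k + 1), w t * f (myPre σ t) :=
    fun f => chain_apply σ w f
  have hy_top : y (k + 1) = 0 := yfun_top xs (k + 1) (by omega)
  have htel : ∀ n : ℕ, ∑ t ∈ Finset.range n, w t = y 0 - y n := fun n =>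
    Finset.sum_range_sub' y n
  have hP0sum : ∑ S : Finset (Fin k), P0 S = 1 := by
    have := happly (fun _ => 1)
    simp only [mul_one] at this
    rw [this, htel, hy_top, hy_def, yfun_zero]
    ring
  have hP0marg : ∀ i, ∑ S : Finset (Fin k), (if i ∈ S then P0 S else 0) = x i := by
    intro i
    have h1 : ∀ S : Finset (Fin k),
        (if i ∈ S then P0 S else 0) = P0 S * (if i ∈ S then (1:ℝ) else 0) := by
      intro S; split_ifs <;> simp
    rw [Finset.sum_congr rfl fun S _ => h1 S, happly (fun S => if i ∈ S then (1:ℝ) else 0)]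
    have h2 : ∀ t, w t * (if i ∈ myPre σ t then (1:ℝ) else 0)
        = if ((σ.symm i : Fin k) : ℕ) < t then w t else 0 := by
      intro t
      by_cases h : i ∈ myPre σ t
      · rw [if_pos h, if_pos ((mem_myPre σ t i).mp h), mul_one]
      · rw [if_neg h, if_neg (fun hc => h ((mem_myPre σ t i).mpr hc)), mul_zero]
    rw [Finset.sum_congr rfl fun t _ => h2 t, ← Finset.sum_filter]
    have h3 : (Finset.range (k + 1)).filter (fun t => ((σ.symm i : Fin k) : ℕ) < t)
        = Finset.Ico (((σ.symm i : Fin k) : ℕ) + 1) (k + 1) := by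
      ext t; simp only [Finset.mem_filter, Finset.mem_range, Finset.mem_Ico]; omega
    rw [h3, Finset.sum_Ico_eq_sub w (by have := (σ.symm i).isLt; omega), htel, htel, hy_top]
    have h4 : y (((σ.symm i : Fin k) : ℕ) + 1) = xs (σ.symm i) := by
      rw [hy_def, yfun_succ]
    rw [h4]
    have h5 : xs (σ.symm i) = x i := by
      show x (σ (σ.symm i)) = x i
      rw [Equiv.apply_symm_apply]
    rw [h5]; ring
  have hP0val : ∑ S : Finset (Fin k), P0 S * C S = Lval := by
    rw [happly C]
    simp only [hw_def]
    rw [abel_sum y (fun t => C (myPre σ t)) k, myPre_zero, hempty, hy_top, hL]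
    ring
  have hmemL : Lval ∈ Vset := ⟨P0, hP0nn, hP0sum, hP0marg, hP0val.symm⟩
  have hub : ∀ v ∈ Vset, v ≤ Lval := by
    rintro v ⟨P, hPnn, hPsum, hPmarg, rfl⟩
    calc ∑ S : Finset (Fin k), P S * C S
        ≤ ∑ S : Finset (Fin k), P S * ∑ t : Fin k,
            (if σ t ∈ S then C (myPre σ ((t:ℕ)+1)) - C (myPre σ (t:ℕ)) else 0) :=
          Finset.sum_le_sum fun S _ =>
            mul_le_mul_of_nonneg_left (greedy_bound C hsup hempty σ S) (hPnn S)
      _ = ∑ t : Fin k, (∑ S : Finset (Fin k), (if σ t ∈ S then P S else 0)) *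
            (C (myPre σ ((t:ℕ)+1)) - C (myPre σ (t:ℕ))) := by
          simp only [Finset.mul_sum]
          rw [Finset.sum_comm]
          refine Finset.sum_congr rfl fun t _ => ?_
          rw [Finset.sum_mul]
          refine Finset.sum_congr rfl fun S _ => ?_
          split_ifs <;> simp
      _ = ∑ t : Fin k, x (σ t) * (C (myPre σ ((t:ℕ)+1)) - C (myPre σ (t:ℕ))) :=
          Finset.sum_congr rfl fun t _ => by rw [hPmarg (σ t)]
      _ = Lval := rfl
  have hne : ∃ S : Finset (Fin k), True := ⟨∅, trivial⟩
  set m0 : ℝ := (Finset.univ : Finset (Finset (Fin k))).inf' ⟨∅, Finset.mem_univ ∅⟩ C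
    with hm0_def
  have hlb : ∀ v ∈ Vset, m0 ≤ v := by
    rintro v ⟨P, hPnn, hPsum, hPmarg, rfl⟩
    calc m0 = ∑ S : Finset (Fin k), P S * m0 := by
          rw [← Finset.sum_mul, hPsum, one_mul]
      _ ≤ ∑ S : Finset (Fin k), P S * C S :=
          Finset.sum_le_sum fun S _ =>
            mul_le_mul_of_nonneg_left (Finset.inf'_le C (Finset.mem_univ S)) (hPnn S)
  have hseteq : Vset = {v : ℝ | ∃ lam : Finset (Fin k) → ℝ,
        (∀ S, 0 ≤ lam S) ∧ (∑ S : Finset (Fin k), lam S) = 1 ∧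
        (∀ i, ∑ S : Finset (Fin k), lam S * (if i ∈ S then (1:ℝ) else 0) = x i) ∧
        v = ∑ S : Finset (Fin k), lam S * C S} := by
    ext v
    simp only [hVset_def, Set.mem_setOf_eq, mul_ite, mul_one, mul_zero]
  refine ⟨fun A B => by have := hsup A B; linarith, ?_, ?_, ?_⟩
  · exact le_antisymm (csSup_le ⟨Lval, hmemL⟩ hub) (le_csSup ⟨Lval, hub⟩ hmemL)
  · rw [hseteq]
  · exact csInf_le ⟨m0, fun v hv => hlb v hv⟩ hmemL
end
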